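/- arXiv:2005.07620 — 3 statements merged into one kernel-verified Lean document; each statement's English description precedes it below -/
import Mathlib

section
/- For coprime positive integers p, q, the parametrization T_{p,q} restricted to [0, 2π) is injective: if s, t ∈ [0, 2π) and T_{p,q}(s) = T_{p,q}(t), then s = t. -/
open Real

/-- The torus-knot parametrization `T_{p,q}` is injective on `[0, 2π)`. -/
theorem stmt_3 (p q : ℕ) (hp : 0 < p) (hq : 0 < q) (hpq : Nat.Coprime p q)
    (s t : ℝ) (hs : s ∈ Set.Ico 0 (2 * π)) (ht : t ∈ Set.Ico 0 (2 * π))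
    (h : (Real.cos (q * s) * (2 + Real.cos (p * s)),
          Real.sin (q * s) * (2 + Real.cos (p * s)),
          Real.sin (p * s))
       = (Real.cos (q * t) * (2 + Real.cos (p * t)),
          Real.sin (q * t) * (2 + Real.cos (p * t)),
          Real.sin (p * t))) :
    s = t := by
  obtain ⟨h1, h2, h3⟩ : _ ∧ _ ∧ _ := by
    simpa [Prod.ext_iff] using h
  have hrs : (1:ℝ) ≤ 2 + Real.cos (p * s) := by nlinarith [Real.neg_one_le_cos (p * s)]
  have hrt : (1:ℝ) ≤ 2 + Real.cos (p * t) := by nlinarith [Real.neg_one_le_cos (p * t)]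
  have hr : 2 + Real.cos (p * s) = 2 + Real.cos (p * t) := by
    have e1 : (Real.cos (q*s) * (2 + Real.cos (p*s)))^2
        = (Real.cos (q*t) * (2 + Real.cos (p*t)))^2 := by rw [h1]
    have e2 : (Real.sin (q*s) * (2 + Real.cos (p*s)))^2
        = (Real.sin (q*t) * (2 + Real.cos (p*t)))^2 := by rw [h2]
    have hsq : (2 + Real.cos (p * s))^2 = (2 + Real.cos (p * t))^2 := by
      linear_combination e1 + e2
        - (2 + Real.cos (↑p*s))^2 * Real.sin_sq_add_cos_sq (↑q*s)
        + (2 + Real.cos (↑p*t))^2 * Real.sin_sq_add_cos_sq (↑q*t)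
    nlinarith
  have hcp : Real.cos (p * s) = Real.cos (p * t) := by linarith
  have hcq : Real.cos (q * s) = Real.cos (q * t) := by
    have : (2 + Real.cos (p * t)) ≠ 0 := by linarith
    rw [hr] at h1
    exact mul_right_cancel₀ this h1
  have hsq' : Real.sin (q * s) = Real.sin (q * t) := by
    have : (2 + Real.cos (p * t)) ≠ 0 := by linarith
    rw [hr] at h2
    exact mul_right_cancel₀ this h2
  obtain ⟨a, ha⟩ := Real.Angle.angle_eq_iff_two_pi_dvd_sub.1
    (Real.Angle.cos_sin_inj hcp h3)
  obtain ⟨b, hb⟩ := Real.Angle.angle_eq_iff_two_pi_dvd_sub.1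
    (Real.Angle.cos_sin_inj hcq hsq')
  -- p*(s-t) = 2π a, q*(s-t) = 2π b
  have hab : (q : ℝ) * ((p:ℝ) * s - p * t) = (p : ℝ) * ((q:ℝ) * s - q * t) := by ring
  have hπ : (0:ℝ) < π := Real.pi_pos
  have hqa : (q : ℤ) * a = (p : ℤ) * b := by
    have : (q : ℝ) * a = (p : ℝ) * b := by
      have := hab
      rw [ha, hb] at this
      have h2π : (2 * π) ≠ 0 := by positivity
      have h6 : (2*π) * ((q:ℝ)*a) = (2*π) * ((p:ℝ)*b) := by linear_combination this
      exact mul_left_cancel₀ h2π h6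
    exact_mod_cast this
  have hcop : IsCoprime (p:ℤ) (q:ℤ) :=
    Int.isCoprime_iff_gcd_eq_one.2 (by exact_mod_cast hpq)
  have hpa : (p:ℤ) ∣ a := hcop.dvd_of_dvd_mul_left ⟨b, hqa⟩
  obtain ⟨c, hc⟩ := hpa
  have hpne : (p:ℝ) ≠ 0 := by positivity
  have hst : s - t = 2*π*c := by
    have h4 : (p:ℝ) * (s - t) = (p:ℝ) * (2*π*c) := by
      have : (a:ℝ) = (p:ℝ) * c := by exact_mod_cast congrArg (Int.cast : ℤ → ℝ) hc
      rw [mul_sub]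
      rw [ha, this]; ring
    exact mul_left_cancel₀ hpne h4
  have hc0 : c = 0 := by
    have h5 : -1 < (c:ℝ) ∧ (c:ℝ) < 1 := by
      obtain ⟨hs1, hs2⟩ := hs; obtain ⟨ht1, ht2⟩ := ht
      constructor <;> nlinarith [Real.pi_pos]
    have : -1 < c ∧ c < 1 := by exact_mod_cast h5
    omega
  rw [hc0] at hst
  push_cast at hst
  linarith
end

section
/- Let γ : (−δ, δ) → ℝⁿ be real analytic with γ(0) = 0, given near 0 by a convergent power series γ(t) = Σ_{k≥1} a_k t^k with a_k ∈ ℝⁿ, and let N be the smallest positive integer with a_N ≠ 0. Then the map γ̃(s) := γ(s^{1/N}) defined on [0, ε) for small ε > 0 is continuously differentiable up to the boundary with γ̃'(0) = a_N ≠ 0. -/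
open Real Set Filter

section Aux

variable {E : Type*} [NormedAddCommGroup E] [NormedSpace ℝ E] [CompleteSpace E]

/-- auxiliary: the "divided" function is analytic and factors γ. -/
theorem aux_main (δ : ℝ) (hδ : 0 < δ) (γ : ℝ → E) (a : ℕ → E)
    (hγ0 : γ 0 = 0) (ha0 : a 0 = 0)
    (hconv : ∀ t : ℝ, |t| < δ → HasSum (fun k : ℕ => t ^ k • a k) (γ t))
    (N : ℕ) (hN : 0 < N)
    (hmin : ∀ k : ℕ, 0 < k → k < N → a k = 0) :
    ∃ g : ℝ → E, g 0 = a N ∧ (∀ t : ℝ, |t| < δ → γ t = t ^ N • g t) ∧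
      (∀ t : ℝ, |t| < δ → AnalyticAt ℝ g t) := by
  classical
  set g : ℝ → E := fun t => if t = 0 then a N else (t ^ N)⁻¹ • γ t with hgdef
  have hg0 : g 0 = a N := if_pos rfl
  -- sum of first N terms vanishes
  have hzero : ∀ t : ℝ, (∑ i ∈ Finset.range N, t ^ i • a i) = 0 := by
    intro t
    apply Finset.sum_eq_zero
    intro i hi
    rcases Nat.eq_zero_or_pos i with rfl | hipos
    · simp [ha0]
    · rw [hmin i hipos (Finset.mem_range.mp hi), smul_zero]
  have hshift : ∀ t : ℝ, |t| < δ →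
      HasSum (fun j : ℕ => t ^ (j + N) • a (j + N)) (γ t) := by
    intro t ht
    have h1 := hconv t ht
    have h2 : HasSum (fun j : ℕ => t ^ (j + N) • a (j + N))
        (γ t - ∑ i ∈ Finset.range N, t ^ i • a i) :=
      (hasSum_nat_add_iff' (f := fun k => t ^ k • a k) N).2 h1
    rwa [hzero t, sub_zero] at h2
  have hgsum : ∀ t : ℝ, |t| < δ → HasSum (fun j : ℕ => t ^ j • a (N + j)) (g t) := by
    intro t ht
    rcases eq_or_ne t 0 with rfl | htne
    · rw [hg0]
      have h := hasSum_single (f := fun j : ℕ => (0 : ℝ) ^ j • a (N + j)) 0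
        (by intro b hb; simp [zero_pow hb])
      simpa using h
    · have h2 := hshift t ht
      have h3 : HasSum (fun j : ℕ => (t ^ N)⁻¹ • (t ^ (j + N) • a (j + N)))
          ((t ^ N)⁻¹ • γ t) := h2.const_smul _
      have h4 : (fun j : ℕ => (t ^ N)⁻¹ • (t ^ (j + N) • a (j + N)))
          = fun j : ℕ => t ^ j • a (N + j) := by
        funext j
        rw [smul_smul, pow_add, ← mul_assoc, mul_comm ((t ^ N)⁻¹) (t ^ j), mul_assoc,
          inv_mul_cancel₀ (pow_ne_zero _ htne), mul_one, Nat.add_comm j N]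
      rw [h4] at h3
      rw [hgdef]
      simpa [htne] using h3
  refine ⟨g, hg0, ?_, ?_⟩
  · intro t ht
    rcases eq_or_ne t 0 with rfl | htne
    · rw [hγ0, zero_pow hN.ne', zero_smul]
    · rw [hgdef]
      simp only [htne, if_neg, ite_false]
      rw [smul_smul, mul_inv_cancel₀ (pow_ne_zero _ htne), one_smul]
  · -- analyticity
    set q : FormalMultilinearSeries ℝ ℝ E :=
      fun j => ContinuousMultilinearMap.mkPiRing ℝ (Fin j) (a (N + j)) with hqdef
    have hqnorm : ∀ j, ‖q j‖ = ‖a (N + j)‖ := by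
      intro j; rw [hqdef]; exact ContinuousMultilinearMap.norm_mkPiRing _
    have hrad : ENNReal.ofReal δ ≤ q.radius := by
      apply ENNReal.le_of_forall_nnreal_lt
      intro r hr
      have hrδ : (r : ℝ) < δ := by
        have := (ENNReal.ofReal_lt_ofReal_iff hδ).mp
          (by rwa [ENNReal.ofReal_coe_nnreal])
        exact this
      have habs : |(r : ℝ)| < δ := by rwa [abs_of_nonneg r.coe_nonneg]
      have hsum := hgsum (r : ℝ) habs
      have htend : Tendsto (fun j : ℕ => ‖(r : ℝ) ^ j • a (N + j)‖) atTop (nhds 0) := by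
        have := hsum.summable.tendsto_atTop_zero
        simpa using (this.norm)
      obtain ⟨C, hC⟩ := htend.bddAbove_range
      apply q.le_radius_of_bound C
      intro j
      have : ‖q j‖ * (r : ℝ) ^ j = ‖(r : ℝ) ^ j • a (N + j)‖ := by
        rw [hqnorm, norm_smul, norm_pow, Real.norm_eq_abs, abs_of_nonneg r.coe_nonneg,
          mul_comm]
      rw [this]
      exact hC ⟨j, rfl⟩
    have hball : HasFPowerSeriesOnBall g q 0 (ENNReal.ofReal δ) := by
      refine ⟨hrad, ENNReal.ofReal_pos.mpr hδ, ?_⟩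
      intro y hy
      have hy' : |y| < δ := by
        rw [EMetric.mem_ball, edist_zero_right, Real.enorm_eq_ofReal_abs] at hy
        exact (ENNReal.ofReal_lt_ofReal_iff hδ).mp hy
      have := hgsum y hy'
      rw [zero_add]
      convert this using 2 with j
      rw [hqdef]
      simp [ContinuousMultilinearMap.mkPiRing_apply]
    intro t ht
    apply hball.analyticAt_of_mem
    rw [EMetric.mem_ball, edist_zero_right, Real.enorm_eq_ofReal_abs]
    exact (ENNReal.ofReal_lt_ofReal_iff hδ).mpr ht

end Aux

/-- If `γ(t) = Σ_{k≥1} a_k t^k` is real analytic near `0` with `γ(0) = 0` and `N` is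
the smallest positive index with `a_N ≠ 0`, then `γ̃(s) := γ(s^{1/N})` is `C¹` up to
the boundary on `[0, ε)` for small `ε > 0`, with `γ̃'(0) = a_N ≠ 0`. -/
theorem stmt_12 (n : ℕ) (δ : ℝ) (hδ : 0 < δ)
    (γ : ℝ → EuclideanSpace ℝ (Fin n)) (a : ℕ → EuclideanSpace ℝ (Fin n))
    (hγ0 : γ 0 = 0) (ha0 : a 0 = 0)
    (hconv : ∀ t : ℝ, |t| < δ → HasSum (fun k : ℕ => t ^ k • a k) (γ t))
    (N : ℕ) (hN : 0 < N) (haN : a N ≠ 0)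
    (hmin : ∀ k : ℕ, 0 < k → k < N → a k = 0) :
    ∃ ε > 0, ∃ D : ℝ → EuclideanSpace ℝ (Fin n),
      ContinuousOn D (Set.Ico 0 ε) ∧ D 0 = a N ∧ D 0 ≠ 0 ∧
      ∀ s ∈ Set.Ico (0 : ℝ) ε,
        HasDerivWithinAt (fun u : ℝ => γ (u ^ ((1 : ℝ) / N))) (D s) (Set.Ico 0 ε) s := by
  obtain ⟨g, hg0, hfac, hanal⟩ := aux_main δ hδ γ a hγ0 ha0 hconv N hN hmin
  have hN0 : (N : ℝ) ≠ 0 := Nat.cast_ne_zero.mpr hN.ne'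
  set p : ℝ := (1 : ℝ) / N with hpdef
  have hppos : 0 < p := by positivity
  set φ : ℝ → ℝ := fun u => u ^ p with hφdef
  have hφ0 : φ 0 = 0 := by rw [hφdef]; exact Real.zero_rpow hppos.ne'
  set ε : ℝ := δ ^ N with hεdef
  have hεpos : 0 < ε := by positivity
  -- φ maps [0, ε) into [0, δ)
  have hφmem : ∀ s ∈ Ico (0 : ℝ) ε, φ s ∈ Ico (0 : ℝ) δ := by
    rintro s ⟨hs0, hsε⟩
    refine ⟨Real.rpow_nonneg hs0 _, ?_⟩
    have hδN : (δ ^ N : ℝ) ^ p = δ := by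
      rw [← Real.rpow_natCast δ N, ← Real.rpow_mul hδ.le, hpdef,
        mul_one_div_cancel hN0, Real.rpow_one]
    calc φ s < ε ^ p := Real.rpow_lt_rpow hs0 hsε hppos
      _ = δ := by rw [hεdef, hδN]
  have hφabs : ∀ s ∈ Ico (0 : ℝ) ε, |φ s| < δ := by
    intro s hs
    obtain ⟨h1, h2⟩ := hφmem s hs
    rwa [abs_of_nonneg h1]
  -- (φ s)^N = s for s ≥ 0
  have hφpow : ∀ s : ℝ, 0 ≤ s → (φ s) ^ N = s := by
    intro s hs
    rw [hφdef, ← Real.rpow_natCast (s ^ p) N, ← Real.rpow_mul hs, hpdef,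
      one_div_mul_cancel hN0, Real.rpow_one]
  -- the factorization on [0, ε)
  have heq : ∀ u ∈ Ico (0 : ℝ) ε, γ (u ^ p) = u • g (u ^ p) := by
    intro u hu
    rw [hfac (φ u) (hφabs u hu), hφpow u hu.1]
  -- derivative of g as a function
  have hgderiv : ∀ t : ℝ, |t| < δ → ContinuousAt (deriv g) t := by
    intro t ht
    have h1 : ContinuousAt (fderiv ℝ g) t := (hanal t ht).fderiv.continuousAt
    have h2 : ContinuousAt (fun y => fderiv ℝ g y (1 : ℝ)) t :=
      ((ContinuousLinearMap.apply ℝ (EuclideanSpace ℝ (Fin n)) (1 : ℝ)).continuous.continuousAt).comp h1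
    exact h2
  have hφcont : ∀ s : ℝ, ContinuousAt φ s := fun s =>
    Real.continuousAt_rpow_const s p (Or.inr hppos.le)
  set D : ℝ → EuclideanSpace ℝ (Fin n) :=
    fun s => g (φ s) + (p * φ s) • deriv g (φ s) with hDdef
  have hD0 : D 0 = a N := by
    rw [hDdef]
    simp only [hφ0, mul_zero, zero_smul, add_zero, hg0]
  refine ⟨ε, hεpos, D, ?_, hD0, by rw [hD0]; exact haN, ?_⟩
  · -- continuity of D
    intro s hs
    apply ContinuousAt.continuousWithinAt
    have habs := hφabs s hs
    have hc1 : ContinuousAt (fun u => g (φ u)) s :=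
      ((hanal _ habs).continuousAt).comp (hφcont s)
    have hc2 : ContinuousAt (fun u => deriv g (φ u)) s :=
      (hgderiv _ habs).comp (hφcont s)
    exact hc1.add (((continuousAt_const.mul (hφcont s))).smul hc2)
  · rintro s hs
    have hmem := hφmem s hs
    rcases eq_or_ne s 0 with rfl | hsne
    · -- boundary point
      rw [hD0]
      have key : HasDerivWithinAt (fun u : ℝ => u • g (φ u)) (a N) (Ico 0 ε) 0 := by
        rw [hasDerivWithinAt_iff_tendsto_slope]
        have htend : Tendsto (fun u => g (φ u)) (nhdsWithin 0 (Ico 0 ε \ {0})) (nhds (a N)) := by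
          have : ContinuousAt (fun u => g (φ u)) 0 := by
            have h0 : |φ 0| < δ := by rw [hφ0, abs_zero]; exact hδ
            exact ((hanal _ h0).continuousAt).comp (hφcont 0)
          have := this.tendsto
          rw [hφ0, hg0] at this
          exact this.mono_left nhdsWithin_le_nhds
        apply htend.congr'
        filter_upwards [self_mem_nhdsWithin] with u hu
        obtain ⟨hu1, hu2⟩ := hu
        have hune : u ≠ 0 := hu2
        rw [slope_def_module]
        simp only [zero_smul, sub_zero]
        rw [smul_smul, inv_mul_cancel₀ hune, one_smul]
      exact key.congr (fun u hu => heq u hu) (by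
        rw [heq 0 ⟨le_refl 0, hεpos⟩])
    · -- interior point: s > 0
      have hspos : 0 < s := lt_of_le_of_ne hs.1 (Ne.symm hsne)
      have hφds : HasDerivAt φ (p * s ^ (p - 1)) s :=
        Real.hasDerivAt_rpow_const (Or.inl hsne)
      have hgd : HasDerivAt g (deriv g (φ s)) (φ s) :=
        ((hanal _ (hφabs s hs)).differentiableAt).hasDerivAt
      have hcomp : HasDerivAt (fun u => g (φ u)) ((p * s ^ (p - 1)) • deriv g (φ s)) s :=
        hgd.scomp s hφds
      have hprod : HasDerivAt (fun u : ℝ => u • g (φ u))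
          (s • ((p * s ^ (p - 1)) • deriv g (φ s)) + (1 : ℝ) • g (φ s)) s :=
        (hasDerivAt_id s).smul hcomp
      have hDs : s • ((p * s ^ (p - 1)) • deriv g (φ s)) + (1 : ℝ) • g (φ s) = D s := by
        rw [hDdef, one_smul, smul_smul, add_comm]
        congr 2
        rw [hφdef]
        have : s * (p * s ^ (p - 1)) = p * (s ^ (1 : ℝ) * s ^ (p - 1)) := by
          rw [Real.rpow_one]; ring
        rw [this, ← Real.rpow_add hspos]
        ring_nf
      rw [← hDs]
      exact (hprod.hasDerivWithinAt).congr (fun u hu => heq u hu) (heq s hs)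
end

section
/- Let γ(t) = Σ_{k≥1} a_k t^k be a convergent power series on (−δ, δ) with values in ℝⁿ, a_k = 0 for k < N and a_N ≠ 0, and let γ̃(s) = γ(s^{1/N}) for s > 0. Then the second derivative of γ̃ satisfies ∫_0^{t_a} |γ̃''(t)|₂ dt < ∞ for all sufficiently small t_a > 0; in particular |γ̃''(t)|₂ ≤ Σ_{k=1}^∞ |a_{N+k}|₂ (k/N)(1 + k/N) t^{k/N − 1} for 0 < t ≪ 1, and this majorant is integrable near 0. -/
/-! For `0 < s < t₀ := (δ/2)^N` the reparametrised curve is the Puiseux series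
`γ̃ s = ∑ s^(k/N) • a k`. It can be differentiated termwise twice on `(0, t₀)`, since every
weighted series `∑ k^m ‖a k‖ (δ/2)^k` converges. In the resulting expansion
`γ̃'' s = ∑ (k/N) (k/N - 1) s^(k/N - 2) • a k` the terms with `k ≤ N` vanish (for `k = N`
because of the factor `k/N - 1`), so every surviving exponent is at least `1/N - 1 > -1`:
on `(0, t_a]` the majorant is dominated by a multiple of `s^(1/N - 1)`, which is integrable. -/

open MeasureTheory Filter Set

lemma rpow_le_rpow_add_rpow {α T y : ℝ} (r : ℝ) (hα : 0 < α) (hy : y ∈ Icc α T) :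
    y ^ r ≤ α ^ r + T ^ r := by
  rcases le_total 0 r with hr | hr
  · linarith [Real.rpow_le_rpow (hα.le.trans hy.1) hy.2 hr, Real.rpow_nonneg hα.le r]
  · linarith [Real.rpow_le_rpow_of_nonpos hα hy.1 hr,
      Real.rpow_nonneg (hα.le.trans (hy.1.trans hy.2)) r]

lemma rpow_natCast_mul_add_le {p r α T y : ℝ} (k : ℕ) (hp : 0 ≤ p) (hα : 0 < α)
    (hy : y ∈ Icc α T) : y ^ (k * p + r) ≤ (T ^ p) ^ k * (α ^ r + T ^ r) := by
  have hy0 : 0 < y := hα.trans_le hy.1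
  rw [Real.rpow_add hy0, mul_comm (k : ℝ), Real.rpow_mul hy0.le, Real.rpow_natCast]
  exact mul_le_mul
    (pow_le_pow_left₀ (Real.rpow_nonneg hy0.le p) (Real.rpow_le_rpow hy0.le hy.2 hp) k)
    (rpow_le_rpow_add_rpow r hα hy) (Real.rpow_nonneg hy0.le r)
    (pow_nonneg (Real.rpow_nonneg (hy0.le.trans hy.2) p) k)

section PuiseuxSeries

variable {E : Type*} [NormedAddCommGroup E] [NormedSpace ℝ E]

theorem summable_pow_mul_norm_mul_pow_of_lt {a : ℕ → E} {r ρ : ℝ}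
    (ha : Summable fun k : ℕ => r ^ k • a k) (hρ : 0 ≤ ρ) (hρr : ρ < r) (m : ℕ) :
    Summable fun k : ℕ => (k : ℝ) ^ m * ‖a k‖ * ρ ^ k := by
  have hr : 0 < r := hρ.trans_lt hρr
  obtain ⟨C, hC⟩ := ha.tendsto_atTop_zero.norm.bddAbove_range
  have hq : ‖ρ / r‖ < 1 := by
    rw [Real.norm_of_nonneg (by positivity), div_lt_one hr]; exact hρr
  refine ((summable_pow_mul_geometric_of_norm_lt_one m hq).mul_left C).of_nonneg_of_le
    (fun k => by positivity) fun k => ?_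
  have hk : ‖a k‖ * r ^ k ≤ C := by
    simpa [norm_smul, abs_of_pos hr, mul_comm] using hC ⟨k, rfl⟩
  calc (k : ℝ) ^ m * ‖a k‖ * ρ ^ k = (k : ℝ) ^ m * (ρ / r) ^ k * (‖a k‖ * r ^ k) := by
        rw [div_pow]; field_simp
    _ ≤ C * ((k : ℝ) ^ m * (ρ / r) ^ k) := by rw [mul_comm C]; gcongr

-- The `k`-th term of the termwise second derivative of `y ↦ ∑ y ^ (k p) • c k`.
noncomputable def secondDerivTerm (c : ℕ → E) (p x : ℝ) (k : ℕ) : E :=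
  ((k : ℝ) * p * ((k : ℝ) * p - 1) * x ^ ((k : ℝ) * p - 2)) • c k

theorem hasDerivAt_tsum_rpow_smul [CompleteSpace E] {p T x : ℝ} {c : ℕ → E} (q : ℝ)
    (hp : 0 < p) (hc : ∀ m : ℕ, Summable fun k : ℕ => (k : ℝ) ^ m * ‖c k‖ * (T ^ p) ^ k)
    (hx : x ∈ Ioo 0 T) :
    HasDerivAt (fun y => ∑' k : ℕ, y ^ ((k : ℝ) * p + q) • c k)
      (∑' k : ℕ, (((k : ℝ) * p + q) * x ^ ((k : ℝ) * p + q - 1)) • c k) x := by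
  have hx2 : x / 2 ∈ Ioo 0 x := ⟨by linarith [hx.1], by linarith [hx.1]⟩
  have hxU : x ∈ Ioo (x / 2) T := ⟨hx2.2, hx.2⟩
  refine hasDerivAt_tsum_of_isPreconnected (g := fun (k : ℕ) y => y ^ ((k : ℝ) * p + q) • c k)
    (g' := fun (k : ℕ) y => (((k : ℝ) * p + q) * y ^ ((k : ℝ) * p + q - 1)) • c k)
    (u := fun k : ℕ => (p + |q|) * ((x / 2) ^ (q - 1) + T ^ (q - 1)) *
      ((k : ℝ) ^ 1 * ‖c k‖ * (T ^ p) ^ k + (k : ℝ) ^ 0 * ‖c k‖ * (T ^ p) ^ k))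
    (((hc 1).add (hc 0)).mul_left _) isOpen_Ioo isPreconnected_Ioo (fun k y hy => ?_)
    (fun k y hy => ?_) hxU ?_ hxU
  · exact (Real.hasDerivAt_rpow_const (Or.inl (hx2.1.trans hy.1).ne')).smul_const (c k)
  · have hcoef : |(k : ℝ) * p + q| ≤ (p + |q|) * ((k : ℝ) + 1) := by
      have : (0 : ℝ) ≤ k := k.cast_nonneg
      calc |(k : ℝ) * p + q| ≤ |(k : ℝ) * p| + |q| := abs_add_le _ _
        _ = k * p + |q| := by rw [abs_of_nonneg (by positivity)]
        _ ≤ (p + |q|) * ((k : ℝ) + 1) := by nlinarith [abs_nonneg q]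
    have hpow := rpow_natCast_mul_add_le k (r := q - 1) hp.le hx2.1 ⟨hy.1.le, hy.2.le⟩
    rw [← add_sub_assoc] at hpow
    have := Real.rpow_nonneg (hx2.1.trans hy.1).le ((k : ℝ) * p + q - 1)
    rw [norm_smul, norm_mul, Real.norm_eq_abs, Real.norm_of_nonneg this]
    calc |(k : ℝ) * p + q| * y ^ ((k : ℝ) * p + q - 1) * ‖c k‖
        ≤ (p + |q|) * ((k : ℝ) + 1) * ((T ^ p) ^ k * ((x / 2) ^ (q - 1) + T ^ (q - 1)))
          * ‖c k‖ := by gcongr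
      _ = _ := by ring
  · refine ((hc 0).mul_left (x ^ q + T ^ q)).of_norm_bounded fun k => ?_
    have hpow := rpow_natCast_mul_add_le k (r := q) hp.le hx.1 ⟨le_rfl, hx.2.le⟩
    rw [norm_smul, Real.norm_of_nonneg (Real.rpow_nonneg hx.1.le _)]
    calc x ^ ((k : ℝ) * p + q) * ‖c k‖ ≤ (T ^ p) ^ k * (x ^ q + T ^ q) * ‖c k‖ := by
          gcongr
      _ = _ := by ring

theorem deriv_deriv_eq_tsum_rpow_smul [CompleteSpace E] {p T x : ℝ} {c : ℕ → E}
    {f : ℝ → E} (hp : 0 < p)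
    (hc : ∀ m : ℕ, Summable fun k : ℕ => (k : ℝ) ^ m * ‖c k‖ * (T ^ p) ^ k)
    (hf : ∀ y ∈ Ioo 0 T, f y = ∑' k : ℕ, y ^ ((k : ℝ) * p) • c k) (hx : x ∈ Ioo 0 T) :
    deriv (deriv f) x = ∑' k : ℕ, secondDerivTerm c p x k := by
  set c' : ℕ → E := fun k => ((k : ℝ) * p) • c k
  have hc' : ∀ m : ℕ, Summable fun k : ℕ => (k : ℝ) ^ m * ‖c' k‖ * (T ^ p) ^ k :=
    fun m => ((hc (m + 1)).mul_left p).congr fun k => by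
      rw [norm_smul, Real.norm_of_nonneg (by positivity)]
      ring
  have hderiv : ∀ y ∈ Ioo 0 T,
      HasDerivAt f (∑' k : ℕ, y ^ ((k : ℝ) * p + -1) • c' k) y := by
    intro y hy
    have h := hasDerivAt_tsum_rpow_smul 0 hp hc hy
    simp only [add_zero] at h
    refine (h.congr_of_eventuallyEq ?_).congr_deriv (tsum_congr fun k => ?_)
    · filter_upwards [isOpen_Ioo.mem_nhds hy] with z hz using hf z hz
    · rw [smul_smul, mul_comm, sub_eq_add_neg]
  have hderiv_eq :
      deriv f =ᶠ[nhds x] fun y => ∑' k : ℕ, y ^ ((k : ℝ) * p + -1) • c' k := by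
    filter_upwards [isOpen_Ioo.mem_nhds hx] with y hy using (hderiv y hy).deriv
  rw [hderiv_eq.deriv_eq, (hasDerivAt_tsum_rpow_smul (-1) hp hc' hx).deriv]
  refine tsum_congr fun k => ?_
  rw [secondDerivTerm, smul_smul, show (k : ℝ) * p + -1 - 1 = k * p - 2 by ring]
  congr 1
  ring

theorem summable_norm_secondDerivTerm {p T x : ℝ} {c : ℕ → E} (hp : 0 < p)
    (hc : ∀ m : ℕ, Summable fun k : ℕ => (k : ℝ) ^ m * ‖c k‖ * (T ^ p) ^ k)
    (hx : x ∈ Ioo 0 T) : Summable fun k : ℕ => ‖secondDerivTerm c p x k‖ := by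
  refine ((((hc 2).mul_left (p ^ 2)).add ((hc 1).mul_left p)).mul_left
    (x ^ (-2 : ℝ) + T ^ (-2 : ℝ))).of_nonneg_of_le (fun k => norm_nonneg _) fun k => ?_
  have hkp : (0 : ℝ) ≤ k * p := by positivity
  have hpow := rpow_natCast_mul_add_le k (r := -2) hp.le hx.1 ⟨le_rfl, hx.2.le⟩
  rw [← sub_eq_add_neg] at hpow
  have hxpow := Real.rpow_nonneg hx.1.le ((k : ℝ) * p - 2)
  have := Real.rpow_nonneg hx.1.le (-2 : ℝ)
  have := Real.rpow_nonneg (hx.1.le.trans hx.2.le) (-2 : ℝ)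
  have := Real.rpow_nonneg (hx.1.le.trans hx.2.le) p
  rw [secondDerivTerm, norm_smul, Real.norm_eq_abs, abs_mul, abs_mul, abs_of_nonneg hkp,
    abs_of_nonneg hxpow]
  calc (k : ℝ) * p * |(k : ℝ) * p - 1| * x ^ ((k : ℝ) * p - 2) * ‖c k‖
      ≤ (k : ℝ) * p * ((k : ℝ) * p + 1) * ((T ^ p) ^ k * (x ^ (-2 : ℝ) + T ^ (-2 : ℝ)))
          * ‖c k‖ := by
        gcongr
        exact (abs_sub _ _).trans (by rw [abs_one, abs_of_nonneg hkp])
    _ = _ := by ring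

end PuiseuxSeries

theorem integrableOn_tsum_mul_rpow_sub_one {b e : ℕ → ℝ} {ε T : ℝ} (hb : ∀ j, 0 ≤ b j)
    (hε : 0 < ε) (he : ∀ j, ε ≤ e j) (hT : 0 < T)
    (hsum : Summable fun j => b j * T ^ (e j - 1)) :
    IntegrableOn (fun t => ∑' j, b j * t ^ (e j - 1)) (Ioc 0 T) := by
  have hK : Summable fun j => b j * T ^ (e j - ε) :=
    (hsum.mul_right (T ^ (1 - ε))).congr fun j => by
      rw [mul_assoc, ← Real.rpow_add hT]; ring_nf
  have hterm : ∀ t ∈ Ioc 0 T, ∀ j,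
      b j * t ^ (e j - 1) ≤ b j * T ^ (e j - ε) * t ^ (ε - 1) := by
    intro t ht j
    rw [mul_assoc, show e j - 1 = (e j - ε) + (ε - 1) by ring, Real.rpow_add ht.1]
    exact mul_le_mul_of_nonneg_left (mul_le_mul_of_nonneg_right
      (Real.rpow_le_rpow ht.1.le ht.2 (sub_nonneg.2 (he j))) (Real.rpow_nonneg ht.1.le _))
      (hb j)
  have hsum_t : ∀ t ∈ Ioc 0 T, Summable fun j => b j * t ^ (e j - 1) := fun t ht =>
    (hK.mul_right _).of_nonneg_of_le (fun j => mul_nonneg (hb j) (Real.rpow_nonneg ht.1.le _))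
      (hterm t ht)
  have hdom : IntegrableOn (fun t => (∑' j, b j * T ^ (e j - ε)) * t ^ (ε - 1)) (Ioc 0 T) :=
    ((intervalIntegrable_iff_integrableOn_Ioc_of_le hT.le).1
      (intervalIntegral.intervalIntegrable_rpow' (by linarith))).const_mul _
  refine hdom.mono' ?_ ?_
  · refine aestronglyMeasurable_of_tendsto_ae atTop
      (f := fun n t => ∑ j ∈ Finset.range n, b j * t ^ (e j - 1)) (fun n => ?_) ?_
    · fun_prop
    · filter_upwards [ae_restrict_mem measurableSet_Ioc] with t ht
        using (hsum_t t ht).hasSum.tendsto_sum_nat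
  · filter_upwards [ae_restrict_mem measurableSet_Ioc] with t ht
    rw [Real.norm_of_nonneg
      (tsum_nonneg fun j => mul_nonneg (hb j) (Real.rpow_nonneg ht.1.le _)), ← tsum_mul_right]
    exact (hsum_t t ht).tsum_le_tsum (hterm t ht) (hK.mul_right _)

section Majorant

variable {E : Type*} [NormedAddCommGroup E] [NormedSpace ℝ E] {a : ℕ → E} {N : ℕ} {s : ℝ}

lemma norm_secondDerivTerm_add_succ (hN : 0 < N) (hs : 0 < s) (j : ℕ) :
    ‖secondDerivTerm a (1 / N) s (N + (j + 1))‖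
      = ‖a (N + (j + 1))‖ * (((j : ℝ) + 1) / N) * (1 + ((j : ℝ) + 1) / N)
        * s ^ ((((j : ℝ) + 1) / N) - 1) := by
  have hk : ((N + (j + 1) : ℕ) : ℝ) * (1 / N) = 1 + ((j : ℝ) + 1) / N := by
    have : (N : ℝ) ≠ 0 := by positivity
    push_cast; field_simp
  rw [secondDerivTerm, hk, show 1 + ((j : ℝ) + 1) / N - 1 = ((j : ℝ) + 1) / N by ring,
    show 1 + ((j : ℝ) + 1) / N - 2 = ((j : ℝ) + 1) / N - 1 by ring, norm_smul,
    Real.norm_of_nonneg (by positivity)]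
  ring

lemma add_add_one_injective (N : ℕ) : Function.Injective fun j : ℕ => N + (j + 1) :=
  fun i j h => by simpa using h

lemma summable_majorant (hN : 0 < N) (hs : 0 < s)
    (hsum : Summable fun k : ℕ => ‖secondDerivTerm a (1 / N) s k‖) :
    Summable fun j : ℕ =>
      ‖a (N + (j + 1))‖ * (((j : ℝ) + 1) / N) * (1 + ((j : ℝ) + 1) / N)
        * s ^ ((((j : ℝ) + 1) / N) - 1) :=
  (hsum.comp_injective (add_add_one_injective N)).congr (norm_secondDerivTerm_add_succ hN hs)

lemma norm_tsum_secondDerivTerm_le (hN : 0 < N) (hmin : ∀ k : ℕ, k < N → a k = 0)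
    (hs : 0 < s) (hsum : Summable fun k : ℕ => ‖secondDerivTerm a (1 / N) s k‖) :
    ‖∑' k : ℕ, secondDerivTerm a (1 / N) s k‖
      ≤ ∑' j : ℕ, ‖a (N + (j + 1))‖ * (((j : ℝ) + 1) / N) * (1 + ((j : ℝ) + 1) / N)
        * s ^ ((((j : ℝ) + 1) / N) - 1) := by
  have hsupp : Function.support (secondDerivTerm a (1 / N) s) ⊆
      range fun j : ℕ => N + (j + 1) := by
    intro k hk
    by_contra hk'
    have hkN : k ≤ N := by
      by_contra h
      exact hk' ⟨k - N - 1, show N + (k - N - 1 + 1) = k by omega⟩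
    rcases hkN.lt_or_eq with h | rfl
    · exact hk (by simp [secondDerivTerm, hmin k h])
    · exact hk (by simp [secondDerivTerm, (Nat.cast_pos.2 hN).ne'])
  rw [← (add_add_one_injective N).tsum_eq hsupp]
  exact (norm_tsum_le_tsum_norm (hsum.comp_injective (add_add_one_injective N))).trans_eq
    (tsum_congr (norm_secondDerivTerm_add_succ hN hs))

end Majorant

theorem stmt_13_general (n : ℕ) (δ : ℝ) (hδ : 0 < δ)
    (γ : ℝ → EuclideanSpace ℝ (Fin n)) (a : ℕ → EuclideanSpace ℝ (Fin n))
    (hconv : ∀ t : ℝ, |t| < δ → HasSum (fun k : ℕ => t ^ k • a k) (γ t))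
    (N : ℕ) (hN : 0 < N)
    (hmin : ∀ k : ℕ, k < N → a k = 0) :
    ∃ t₀ > 0, ∀ t_a ∈ Set.Ioo (0 : ℝ) t₀,
      (IntegrableOn
          (fun t : ℝ => ‖deriv (deriv (fun u : ℝ => γ (u ^ ((1 : ℝ) / N)))) t‖)
          (Set.Ioc 0 t_a))
      ∧ (∀ t ∈ Set.Ioo (0 : ℝ) t_a,
          ‖deriv (deriv (fun u : ℝ => γ (u ^ ((1 : ℝ) / N)))) t‖
            ≤ ∑' k : ℕ, ‖a (N + (k + 1))‖ * (((k : ℝ) + 1) / N) * (1 + ((k : ℝ) + 1) / N)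
                * t ^ ((((k : ℝ) + 1) / N) - 1))
      ∧ IntegrableOn
          (fun t : ℝ => ∑' k : ℕ,
            ‖a (N + (k + 1))‖ * (((k : ℝ) + 1) / N) * (1 + ((k : ℝ) + 1) / N)
              * t ^ ((((k : ℝ) + 1) / N) - 1))
          (Set.Ioc 0 t_a) := by
  have hp : (0 : ℝ) < 1 / N := by positivity
  set t₀ : ℝ := (δ / 2) ^ N with ht₀
  have ht₀p : t₀ ^ ((1 : ℝ) / N) = δ / 2 := by
    rw [ht₀, ← Real.rpow_natCast, ← Real.rpow_mul (by positivity),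
      mul_one_div_cancel (by positivity), Real.rpow_one]
  have hc : ∀ m : ℕ,
      Summable fun k : ℕ => (k : ℝ) ^ m * ‖a k‖ * (t₀ ^ ((1 : ℝ) / N)) ^ k :=
    fun m => ht₀p ▸ summable_pow_mul_norm_mul_pow_of_lt
      (hconv (3 * δ / 4) (by rw [abs_of_pos (by positivity)]; linarith)).summable
      (by positivity) (by linarith) m
  have hγ : ∀ y ∈ Ioo 0 t₀,
      γ (y ^ ((1 : ℝ) / N)) = ∑' k : ℕ, y ^ ((k : ℝ) * (1 / N)) • a k := by
    intro y hy
    have hy' : |y ^ ((1 : ℝ) / N)| < δ := by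
      rw [abs_of_pos (Real.rpow_pos_of_pos hy.1 _)]
      linarith [ht₀p ▸ Real.rpow_lt_rpow hy.1.le hy.2 hp]
    simp_rw [mul_comm _ ((1 : ℝ) / N), Real.rpow_mul_natCast hy.1.le]
    exact (hconv _ hy').tsum_eq.symm
  have hbound : ∀ s ∈ Ioo 0 t₀,
      ‖deriv (deriv fun u : ℝ => γ (u ^ ((1 : ℝ) / N))) s‖ ≤
      ∑' k : ℕ, ‖a (N + (k + 1))‖ * (((k : ℝ) + 1) / N) * (1 + ((k : ℝ) + 1) / N)
        * s ^ ((((k : ℝ) + 1) / N) - 1) := fun s hs => by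
    rw [deriv_deriv_eq_tsum_rpow_smul hp hc hγ hs]
    exact norm_tsum_secondDerivTerm_le hN hmin hs.1
      (summable_norm_secondDerivTerm hp hc hs)
  refine ⟨t₀, by positivity, fun t_a hta => ?_⟩
  have hM := integrableOn_tsum_mul_rpow_sub_one
    (b := fun k : ℕ => ‖a (N + (k + 1))‖ * (((k : ℝ) + 1) / N) * (1 + ((k : ℝ) + 1) / N))
    (e := fun k : ℕ => ((k : ℝ) + 1) / N) (fun k => by positivity) hp
    (fun k => by gcongr; linarith [k.cast_nonneg (α := ℝ)]) hta.1
    (summable_majorant hN hta.1 (summable_norm_secondDerivTerm hp hc hta))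
  refine ⟨hM.mono' (aestronglyMeasurable_deriv _ _).norm ?_,
    fun t ht => hbound t ⟨ht.1, ht.2.trans hta.2⟩, hM⟩
  filter_upwards [ae_restrict_mem measurableSet_Ioc] with s hs
  rw [norm_norm]
  exact hbound s ⟨hs.1, hs.2.trans_lt hta.2⟩

/-- Let `γ(t) = Σ_{k≥1} a_k t^k` be a convergent power series on `(-δ, δ)` with values
in `ℝⁿ`, `a_k = 0` for `k < N`, `a_N ≠ 0`, and `γ̃(s) = γ(s^{1/N})` for `s > 0`. Then
for all sufficiently small `t_a > 0` the second derivative of `γ̃` satisfies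
`∫_0^{t_a} |γ̃''(t)| dt < ∞`; moreover `|γ̃''(t)|` is bounded for small `t > 0` by the
majorant `Σ_{k≥1} |a_{N+k}| (k/N)(1 + k/N) t^{k/N - 1}`, which is integrable near `0`. -/
theorem stmt_13 (n : ℕ) (δ : ℝ) (hδ : 0 < δ)
    (γ : ℝ → EuclideanSpace ℝ (Fin n)) (a : ℕ → EuclideanSpace ℝ (Fin n))
    (hconv : ∀ t : ℝ, |t| < δ → HasSum (fun k : ℕ => t ^ k • a k) (γ t))
    (N : ℕ) (hN : 0 < N) (haN : a N ≠ 0)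
    (hmin : ∀ k : ℕ, k < N → a k = 0) :
    ∃ t₀ > 0, ∀ t_a ∈ Set.Ioo (0 : ℝ) t₀,
      (IntegrableOn
          (fun t : ℝ => ‖deriv (deriv (fun u : ℝ => γ (u ^ ((1 : ℝ) / N)))) t‖)
          (Set.Ioc 0 t_a))
      ∧ (∀ t ∈ Set.Ioo (0 : ℝ) t_a,
          ‖deriv (deriv (fun u : ℝ => γ (u ^ ((1 : ℝ) / N)))) t‖
            ≤ ∑' k : ℕ, ‖a (N + (k + 1))‖ * (((k : ℝ) + 1) / N) * (1 + ((k : ℝ) + 1) / N)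
                * t ^ ((((k : ℝ) + 1) / N) - 1))
      ∧ IntegrableOn
          (fun t : ℝ => ∑' k : ℕ,
            ‖a (N + (k + 1))‖ * (((k : ℝ) + 1) / N) * (1 + ((k : ℝ) + 1) / N)
              * t ^ ((((k : ℝ) + 1) / N) - 1))
          (Set.Ioc 0 t_a) :=
  stmt_13_general n δ hδ γ a hconv N hN hmin
end
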